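/- arXiv:2008.05669 — 2 statements merged into one kernel-verified Lean document; each statement's English description precedes it below -/
import Mathlib

section
/- The number of Dyck paths of semilength n whose sequence of valley heights (read left to right) is strictly increasing equals 2^{n−1} for n ≥ 1; equivalently, the generating function of such paths is (1−z)/(1−2z). -/
/-- Height of the vertex after the first `j` steps of the path `w`
(`true` = up-step `u`, `false` = down-step `d`). -/
def hgt (w : List Bool) (j : ℕ) : ℤ :=
  ((w.take j).count true : ℤ) - ((w.take j).count false : ℤ)

/-- `w` is a Dyck word: equally many `u`'s and `d`'s, and every prefix
has at least as many `u`'s as `d`'s. -/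
def IsDyckWord (w : List Bool) : Prop :=
  w.count true = w.count false ∧ ∀ j, 0 ≤ hgt w j

instance : DecidablePred IsDyckWord := fun w => by
  have : IsDyckWord w ↔ (w.count true = w.count false ∧
      ∀ j ∈ List.range (w.length + 1), 0 ≤ hgt w j) := by
    constructor
    · rintro ⟨h1, h2⟩; exact ⟨h1, fun j _ => h2 j⟩
    · rintro ⟨h1, h2⟩
      refine ⟨h1, fun j => ?_⟩
      rcases le_or_gt j w.length with h | h
      · exact h2 j (List.mem_range.mpr (Nat.lt_succ_of_le h))
      · have : w.take j = w := List.take_of_length_le h.le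
        have hw : hgt w j = hgt w w.length := by
          unfold hgt
          rw [this, List.take_of_length_le (le_refl _)]
        rw [hw]
        exact h2 w.length (List.mem_range.mpr (Nat.lt_succ_of_le (le_refl _)))
  exact decidable_of_iff' _ this

/-- there is a peak (an occurrence of `ud`) at positions `i, i+1`. -/
def isPeakB (w : List Bool) (i : ℕ) : Bool :=
  w.getD i false && !(w.getD (i+1) true)

/-- there is a valley (an occurrence of `du`) at positions `i, i+1`. -/
def isValleyB (w : List Bool) (i : ℕ) : Bool :=
  !(w.getD i true) && w.getD (i+1) false

/-- length of the maximal run of `u`'s ending at position `i`. -/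
def upRunL (w : List Bool) (i : ℕ) : ℕ :=
  ((List.range (i+1)).takeWhile (fun k => w.getD (i-k) false)).length

/-- length of the maximal run of `d`'s starting at position `i`. -/
def downRunR (w : List Bool) (i : ℕ) : ℕ :=
  ((List.range (w.length - i)).takeWhile (fun k => !(w.getD (i+k) true))).length

/-- length of the maximal run of `d`'s ending at position `i`. -/
def downRunL (w : List Bool) (i : ℕ) : ℕ :=
  ((List.range (i+1)).takeWhile (fun k => !(w.getD (i-k) true))).length

/-- length of the maximal run of `u`'s starting at position `i`. -/
def upRunR (w : List Bool) (i : ℕ) : ℕ :=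
  ((List.range (w.length - i)).takeWhile (fun k => w.getD (i+k) false)).length

/-- The peak at `i` is symmetric: its maximal mountain `u^a d^b` has `a = b`. -/
def isSymPeakB (w : List Bool) (i : ℕ) : Bool :=
  isPeakB w i && (upRunL w i == downRunR w (i+1))

/-- The peak at `i` is asymmetric: its maximal mountain `u^a d^b` has `a ≠ b`. -/
def isAsymPeakB (w : List Bool) (i : ℕ) : Bool :=
  isPeakB w i && !(upRunL w i == downRunR w (i+1))

/-- weight of the peak at `i`: `min a b` for its maximal mountain `u^a d^b`. -/
def peakWeight (w : List Bool) (i : ℕ) : ℕ :=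
  min (upRunL w i) (downRunR w (i+1))

/-- The valley at `i` is symmetric: the maximal `d^a u^b` containing it has `a = b`. -/
def isSymValleyB (w : List Bool) (i : ℕ) : Bool :=
  isValleyB w i && (downRunL w i == upRunR w (i+1))

/-- weight of the valley at `i`: the largest `j` with `d^j u^j` through the valley. -/
def valleyWeight (w : List Bool) (i : ℕ) : ℕ :=
  min (downRunL w i) (upRunR w (i+1))

def peakCount (w : List Bool) : ℕ := ((List.range w.length).filter (isPeakB w)).length
def spCount (w : List Bool) : ℕ := ((List.range w.length).filter (isSymPeakB w)).length
def apCount (w : List Bool) : ℕ := ((List.range w.length).filter (isAsymPeakB w)).length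
def svalCount (w : List Bool) : ℕ := ((List.range w.length).filter (isSymValleyB w)).length

/-- total weight of the symmetric peaks of `w`. -/
def spWeight (w : List Bool) : ℕ :=
  (((List.range w.length).filter (isSymPeakB w)).map (peakWeight w)).sum

/-- total weight of the asymmetric peaks of `w`. -/
def apWeight (w : List Bool) : ℕ :=
  (((List.range w.length).filter (isAsymPeakB w)).map (peakWeight w)).sum

/-- total weight of the symmetric valleys of `w`. -/
def svWeight (w : List Bool) : ℕ :=
  (((List.range w.length).filter (isSymValleyB w)).map (valleyWeight w)).sum

/-- positions of the peaks of `w`, from left to right. -/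
def peakList (w : List Bool) : List ℕ := (List.range w.length).filter (isPeakB w)

/-- positions of the valleys of `w`, from left to right. -/
def valleyList (w : List Bool) : List ℕ := (List.range w.length).filter (isValleyB w)

/-- heights of the peaks of `w`, from left to right. -/
def peakHeights (w : List Bool) : List ℤ := (peakList w).map (fun i => hgt w (i+1))

/-- heights of the valleys of `w`, from left to right. -/
def valleyHeights (w : List Bool) : List ℤ := (valleyList w).map (fun i => hgt w (i+1))

/-- number of pairs of adjacent equal entries of a list. -/
def eqAdjCount (l : List ℤ) : ℕ :=
  ((l.zip l.tail).filter (fun p => decide (p.1 = p.2))).length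

/-- `sp'`: number of pairs of consecutive valleys of `w` at the same height. -/
def spPrime (w : List Bool) : ℕ := eqAdjCount (valleyHeights w)

/-- all Bool lists of length `m`, as a Finset. -/
def boolLists (m : ℕ) : Finset (List Bool) :=
  Finset.image (fun f : Fin m → Bool => List.ofFn f) Finset.univ

/-- The (finite) set of Dyck words of semilength `n`. -/
def dyckFinset (n : ℕ) : Finset (List Bool) :=
  (boolLists (2*n)).filter (fun w => IsDyckWord w)


/-!
Cutting a nonempty Dyck path at its last return to the axis before the end writes it as
`x u q d` with `x`, `q` Dyck paths. Its valleys are those of `x`, a valley of height `0` where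
`x` ends (if `x` is nonempty), and those of `q` raised by one. As valley heights are
nonnegative, they increase strictly iff `x` has no valley, i.e. `x = u^a d^a`, and those of `q`
increase strictly. So the number `c n` of such paths satisfies `c (n + 1) = ∑_{m ≤ n} c m` with
`c 0 = 1`, whence `c (n + 1) = 2 ^ n`.
-/

def finalHeight (w : List Bool) : ℤ := (w.count true : ℤ) - (w.count false : ℤ)

def stepHeight (b : Bool) : ℤ := if b then 1 else -1

@[simp] lemma finalHeight_nil : finalHeight [] = 0 := by simp [finalHeight]

@[simp] lemma finalHeight_cons (b : Bool) (w : List Bool) :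
    finalHeight (b :: w) = stepHeight b + finalHeight w := by
  cases b <;> simp [finalHeight, stepHeight] <;> ring

@[simp] lemma finalHeight_append (x y : List Bool) :
    finalHeight (x ++ y) = finalHeight x + finalHeight y := by
  simp only [finalHeight, List.count_append]; push_cast; ring

@[simp] lemma finalHeight_replicate (a : ℕ) (b : Bool) :
    finalHeight (List.replicate a b) = a * stepHeight b := by
  induction a with
  | zero => simp
  | succ a ih => rw [List.replicate_succ, finalHeight_cons, ih]; push_cast; ring

lemma hgt_eq_finalHeight_take (w : List Bool) (j : ℕ) : hgt w j = finalHeight (w.take j) := rfl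

lemma forall_take_of_forall_le_length {w : List Bool} {P : List Bool → Prop}
    (h : ∀ j ≤ w.length, P (w.take j)) (j : ℕ) : P (w.take j) := by
  rcases le_or_gt j w.length with hj | hj
  · exact h j hj
  · simpa [List.take_of_length_le hj.le] using h w.length le_rfl

lemma isDyckWord_iff {w : List Bool} :
    IsDyckWord w ↔ finalHeight w = 0 ∧ ∀ j, 0 ≤ finalHeight (w.take j) := by
  simp [IsDyckWord, hgt_eq_finalHeight_take, finalHeight, sub_eq_zero]

namespace IsDyckWord

variable {x y w : List Bool}

lemma finalHeight_eq (hw : IsDyckWord w) : finalHeight w = 0 := (isDyckWord_iff.1 hw).1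

lemma finalHeight_take_nonneg (hw : IsDyckWord w) (j : ℕ) : 0 ≤ finalHeight (w.take j) :=
  (isDyckWord_iff.1 hw).2 j

lemma append (hx : IsDyckWord x) (hy : IsDyckWord y) : IsDyckWord (x ++ y) := by
  refine isDyckWord_iff.2 ⟨by simp [hx.finalHeight_eq, hy.finalHeight_eq], fun j => ?_⟩
  rw [List.take_append, finalHeight_append]
  exact add_nonneg (hx.finalHeight_take_nonneg _) (hy.finalHeight_take_nonneg _)

lemma nest (hy : IsDyckWord y) : IsDyckWord (true :: (y ++ [false])) := by
  refine isDyckWord_iff.2 ⟨by simp [hy.finalHeight_eq, stepHeight], fun j => ?_⟩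
  rcases j with _ | j
  · simp
  · have hlast : -1 ≤ finalHeight ([false].take (j - y.length)) := by
      cases j - y.length <;> simp [stepHeight]
    rw [List.take_succ_cons, finalHeight_cons, List.take_append, finalHeight_append]
    linarith [hy.finalHeight_take_nonneg j, show stepHeight true = 1 from rfl]

lemma getLast?_eq (hw : IsDyckWord w) (hne : w ≠ []) : w.getLast? = some false := by
  obtain ⟨v, b, rfl⟩ := (List.eq_nil_or_concat' w).resolve_left hne
  have hv := hw.finalHeight_take_nonneg v.length
  have h0 := hw.finalHeight_eq
  rw [List.take_left' rfl] at hv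
  cases b
  · simp
  · simp [stepHeight] at h0; linarith

end IsDyckWord

lemma isDyckWord_mountain (a : ℕ) :
    IsDyckWord (List.replicate a true ++ List.replicate a false) := by
  induction a with
  | zero => exact isDyckWord_iff.2 ⟨by simp, fun j => by simp⟩
  | succ a ih =>
    rw [List.replicate_succ, List.replicate_succ', List.cons_append, ← List.append_assoc]
    exact ih.nest


lemma valleyList_cons (b : Bool) (w : List Bool) :
    valleyList (b :: w) =
      (if b = false ∧ w.head? = some true then [0] else []) ++ (valleyList w).map (· + 1) := by
  have hshift : isValleyB (b :: w) ∘ Nat.succ = isValleyB w := by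
    funext i; simp [isValleyB]
  have hzero : isValleyB (b :: w) 0 = decide (b = false ∧ w.head? = some true) := by
    cases w <;> cases b <;> simp [isValleyB]
  simp only [valleyList, List.length_cons, List.range_succ_eq_map, List.filter_cons, hzero,
    List.filter_map, hshift]
  split_ifs <;> simp_all

lemma hgt_cons_succ (b : Bool) (w : List Bool) (j : ℕ) :
    hgt (b :: w) (j + 1) = stepHeight b + hgt w j := by
  simp [hgt_eq_finalHeight_take]

lemma valleyHeights_cons (b : Bool) (w : List Bool) :
    valleyHeights (b :: w) =
      (if b = false ∧ w.head? = some true then [stepHeight b] else []) ++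
        (valleyHeights w).map (· + stepHeight b) := by
  simp only [valleyHeights, valleyList_cons, List.map_append, List.map_map]
  congr 1
  · split_ifs with h
    · obtain ⟨rfl, -⟩ := h
      simp [hgt, stepHeight]
    · rfl
  · refine List.map_congr_left fun i _ => ?_
    simp [hgt_cons_succ, add_comm]

lemma valleyHeights_append (x y : List Bool) :
    valleyHeights (x ++ y) =
      valleyHeights x ++
        (if x.getLast? = some false ∧ y.head? = some true then [finalHeight x] else []) ++
          (valleyHeights y).map (· + finalHeight x) := by
  induction x with
  | nil => simp [valleyHeights, valleyList]
  | cons b x ih =>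
    rw [List.cons_append, valleyHeights_cons, ih, valleyHeights_cons]
    rcases x with _ | ⟨c, x⟩
    · simp [valleyHeights, valleyList, List.map_map, Function.comp_def, add_comm]
    · simp only [List.cons_append, List.head?_cons, List.getLast?_cons_cons, finalHeight_cons,
        List.map_append, List.map_map, Function.comp_def, List.append_assoc]
      by_cases h : (c :: x).getLast? = some false ∧ y.head? = some true <;>
        simp [h, add_comm, add_left_comm]

@[simp] lemma valleyHeights_nil : valleyHeights [] = [] := rfl

@[simp] lemma valleyHeights_replicate (a : ℕ) (b : Bool) :
    valleyHeights (List.replicate a b) = [] := by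
  induction a with
  | zero => rfl
  | succ a ih => cases a <;> cases b <;> simp_all [List.replicate_succ, valleyHeights_cons]

lemma valleyHeights_nest (q : List Bool) :
    valleyHeights (true :: (q ++ [false])) = (valleyHeights q).map (· + 1) := by
  simp [valleyHeights_cons, valleyHeights_append, stepHeight]

lemma exists_eq_replicate_append_replicate {w : List Bool} (hw : valleyHeights w = []) :
    ∃ a b, w = List.replicate a true ++ List.replicate b false := by
  induction w with
  | nil => exact ⟨0, 0, rfl⟩
  | cons c w ih =>
    rw [valleyHeights_cons, List.append_eq_nil_iff, List.map_eq_nil_iff, ite_eq_right_iff] at hw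
    obtain ⟨hc, hw⟩ := hw
    obtain ⟨a, b, rfl⟩ := ih hw
    cases c
    · obtain rfl : a = 0 := by
        by_contra ha
        simp [List.head?_append, List.head?_replicate, ha] at hc
      exact ⟨0, b + 1, by simp [List.replicate_succ]⟩
    · exact ⟨a + 1, b, by simp [List.replicate_succ]⟩

lemma IsDyckWord.valleyHeights_nonneg {w : List Bool} (hw : IsDyckWord w) :
    ∀ h ∈ valleyHeights w, 0 ≤ h := by
  simp only [valleyHeights, List.mem_map]
  rintro _ ⟨i, -, rfl⟩
  exact hw.2 _

lemma IsDyckWord.exists_eq_mountain {w : List Bool} (hw : IsDyckWord w)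
    (hv : valleyHeights w = []) : ∃ a, w = List.replicate a true ++ List.replicate a false := by
  obtain ⟨a, b, rfl⟩ := exists_eq_replicate_append_replicate hv
  have h0 := hw.finalHeight_eq
  simp only [finalHeight_append, finalHeight_replicate, stepHeight] at h0
  obtain rfl : a = b := by norm_num at h0; omega
  exact ⟨a, rfl⟩

lemma exists_eq_nest_of_finalHeight_take_pos {r : List Bool} (hne : r ≠ [])
    (h0 : finalHeight r = 0)
    (hpos : ∀ k, 0 < k → k < r.length → 0 < finalHeight (r.take k)) :
    ∃ q, IsDyckWord q ∧ r = true :: (q ++ [false]) := by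
  obtain ⟨v, d, rfl⟩ := (List.eq_nil_or_concat' r).resolve_left hne
  obtain ⟨c, q, rfl⟩ : ∃ c q, v = c :: q := by
    rcases v with _ | ⟨c, q⟩
    · cases d <;> simp [stepHeight] at h0
    · exact ⟨c, q, rfl⟩
  have hc : c = true := by
    have := hpos 1 one_pos (by simp)
    cases c <;> simp_all [stepHeight]
  subst hc
  have hq : ∀ j, 0 ≤ finalHeight (q.take j) := by
    refine forall_take_of_forall_le_length (P := (0 ≤ finalHeight ·)) fun j hj => ?_
    have := hpos (j + 1) (by omega) (by simp; omega)
    rw [List.cons_append, List.take_succ_cons, List.take_append_of_le_length hj] at this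
    simp only [finalHeight_cons, stepHeight, if_true] at this
    linarith
  have hd : d = false ∧ finalHeight q = 0 := by
    have := hq q.length
    rw [List.take_length] at this
    cases d <;> simp [stepHeight] at h0 ⊢ <;> linarith
  obtain ⟨rfl, hq0⟩ := hd
  exact ⟨q, isDyckWord_iff.2 ⟨hq0, hq⟩, rfl⟩

lemma IsDyckWord.exists_eq_append_nest {w : List Bool} (hw : IsDyckWord w) (hne : w ≠ []) :
    ∃ x q, IsDyckWord x ∧ IsDyckWord q ∧ w = x ++ true :: (q ++ [false]) := by
  obtain ⟨J, hJ⟩ : ∃ J,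
      J = Nat.findGreatest (fun j => finalHeight (w.take j) = 0) (w.length - 1) := ⟨_, rfl⟩
  have hJ0 : finalHeight (w.take J) = 0 := by
    rw [hJ]
    exact Nat.findGreatest_spec (P := fun j => finalHeight (w.take j) = 0) (Nat.zero_le _) (by simp)
  have hJlen : J < w.length := by
    have := Nat.findGreatest_le (P := fun j => finalHeight (w.take j) = 0) (w.length - 1)
    have := List.length_pos_iff.2 hne
    omega
  have hx : IsDyckWord (w.take J) := by
    refine isDyckWord_iff.2 ⟨hJ0, fun j => ?_⟩
    rw [List.take_take]
    exact hw.finalHeight_take_nonneg _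
  have hr0 : finalHeight (w.drop J) = 0 := by
    have := hw.finalHeight_eq
    rwa [← List.take_append_drop J w, finalHeight_append, hJ0, zero_add] at this
  have hrpos : ∀ k, 0 < k → k < (w.drop J).length →
      0 < finalHeight ((w.drop J).take k) := by
    intro k hk hklen
    rw [List.length_drop] at hklen
    have hne0 : finalHeight (w.take (J + k)) ≠ 0 :=
      Nat.findGreatest_is_greatest (P := fun j => finalHeight (w.take j) = 0)
        (by rw [← hJ]; omega) (by omega)
    have hnn := hw.finalHeight_take_nonneg (J + k)
    rw [List.take_add, finalHeight_append, hJ0, zero_add] at hne0 hnn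
    exact lt_of_le_of_ne hnn (Ne.symm hne0)
  obtain ⟨q, hq, hrq⟩ := exists_eq_nest_of_finalHeight_take_pos
    (by simpa using hJlen) hr0 hrpos
  exact ⟨w.take J, q, hx, hq, by rw [← hrq, List.take_append_drop]⟩

def mountainLift (a : ℕ) (q : List Bool) : List Bool :=
  List.replicate a true ++ List.replicate a false ++ true :: (q ++ [false])

@[simp] lemma length_mountainLift (a : ℕ) (q : List Bool) :
    (mountainLift a q).length = 2 * a + 2 + q.length := by
  simp [mountainLift]; ring

lemma isDyckWord_mountainLift {q : List Bool} (hq : IsDyckWord q) (a : ℕ) :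
    IsDyckWord (mountainLift a q) :=
  (isDyckWord_mountain a).append hq.nest

lemma valleyHeights_mountainLift (a : ℕ) (q : List Bool) :
    valleyHeights (mountainLift a q) =
      (if a = 0 then [] else [0]) ++ (valleyHeights q).map (· + 1) := by
  rcases Nat.eq_zero_or_pos a with rfl | ha
  · simp [mountainLift, valleyHeights_nest]
  · simp [mountainLift, valleyHeights_append, valleyHeights_nest,
      List.getLast?_replicate, ha.ne', stepHeight, Function.comp_def]

lemma pairwise_valleyHeights_mountainLift_iff {q : List Bool} (hq : IsDyckWord q) (a : ℕ) :
    (valleyHeights (mountainLift a q)).Pairwise (· < ·) ↔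
      (valleyHeights q).Pairwise (· < ·) := by
  have hshift : ((valleyHeights q).map (· + 1)).Pairwise (· < ·) ↔
      (valleyHeights q).Pairwise (· < ·) := by
    simp [List.pairwise_map]
  rw [valleyHeights_mountainLift, List.pairwise_append, hshift]
  split_ifs
  · simp
  · have := hq.valleyHeights_nonneg
    simp only [List.pairwise_singleton, List.mem_singleton, List.mem_map, true_and]
    constructor
    · exact fun h => h.1
    · rintro h
      refine ⟨h, ?_⟩
      rintro _ rfl _ ⟨v, hv, rfl⟩
      linarith [this v hv]

lemma finalHeight_take_mountainLift_pos {q : List Bool} (hq : IsDyckWord q) (a : ℕ) {k : ℕ}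
    (hk : 2 * a < k) (hkq : k ≤ 2 * a + 1 + q.length) :
    0 < finalHeight ((mountainLift a q).take k) := by
  obtain ⟨j, rfl⟩ : ∃ j, k = 2 * a + (j + 1) := ⟨k - 2 * a - 1, by omega⟩
  have hmlen : (List.replicate a true ++ List.replicate a false).length = 2 * a := by
    simp; ring
  rw [mountainLift, ← hmlen, List.take_length_add_append, List.take_succ_cons,
    List.take_append_of_le_length (by omega)]
  simp only [finalHeight_append, finalHeight_cons, finalHeight_replicate]
  simp [stepHeight]
  linarith [hq.finalHeight_take_nonneg j]

lemma mountainLift_inj {a a' : ℕ} {q q' : List Bool} (hq : IsDyckWord q) (hq' : IsDyckWord q')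
    (h : mountainLift a q = mountainLift a' q') : a = a' ∧ q = q' := by
  wlog hle : a ≤ a' generalizing a a' q q'
  · obtain ⟨h1, h2⟩ := this hq' hq h.symm (by omega)
    exact ⟨h1.symm, h2.symm⟩
  obtain rfl : a = a' := by
    by_contra hne
    have hlen := congrArg List.length h
    simp only [length_mountainLift] at hlen
    have hpos := finalHeight_take_mountainLift_pos hq a (k := 2 * a') (by omega) (by omega)
    rw [h, mountainLift, List.take_left' (by simp; ring)] at hpos
    simp [stepHeight] at hpos
  simpa [mountainLift] using h

lemma IsDyckWord.exists_eq_mountainLift {w : List Bool} (hw : IsDyckWord w) (hne : w ≠ [])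
    (hv : (valleyHeights w).Pairwise (· < ·)) :
    ∃ a q, IsDyckWord q ∧ w = mountainLift a q := by
  obtain ⟨x, q, hx, hq, rfl⟩ := hw.exists_eq_append_nest hne
  have hvx : valleyHeights x = [] := by
    rcases eq_or_ne x [] with rfl | hxne
    · rfl
    rw [valleyHeights_append, valleyHeights_nest, hx.getLast?_eq hxne, hx.finalHeight_eq] at hv
    simp only [List.head?_cons, and_self, if_true, List.pairwise_append] at hv
    refine List.eq_nil_iff_forall_not_mem.2 fun v hv' => ?_
    have := hv.1.2.2 v hv' 0 (by simp)
    linarith [hx.valleyHeights_nonneg v hv']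
  obtain ⟨a, rfl⟩ := hx.exists_eq_mountain hvx
  exact ⟨a, q, hq, rfl⟩

lemma mem_boolLists {w : List Bool} {m : ℕ} : w ∈ boolLists m ↔ w.length = m := by
  simp only [boolLists, Finset.mem_image, Finset.mem_univ, true_and]
  constructor
  · rintro ⟨f, rfl⟩
    simp
  · rintro rfl
    exact ⟨w.get, List.ofFn_get w⟩

def incValleyDyck (n : ℕ) : Finset (List Bool) :=
  (dyckFinset n).filter (fun w => (valleyHeights w).Pairwise (· < ·))

lemma mem_incValleyDyck {n : ℕ} {w : List Bool} :
    w ∈ incValleyDyck n ↔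
      w.length = 2 * n ∧ IsDyckWord w ∧ (valleyHeights w).Pairwise (· < ·) := by
  simp [incValleyDyck, dyckFinset, mem_boolLists, and_assoc]

lemma incValleyDyck_zero : incValleyDyck 0 = {[]} := by
  ext w
  simp only [mem_incValleyDyck, Finset.mem_singleton, mul_zero, List.length_eq_zero_iff]
  constructor
  · exact fun h => h.1
  · rintro rfl
    exact ⟨rfl, isDyckWord_iff.2 ⟨by simp, by simp⟩, by simp⟩

lemma incValleyDyck_succ (n : ℕ) :
    incValleyDyck (n + 1) = ((Finset.range (n + 1)).sigma fun a => incValleyDyck (n - a)).image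
      fun p => mountainLift p.1 p.2 := by
  ext w
  simp only [Finset.mem_image, Finset.mem_sigma, Finset.mem_range, Sigma.exists,
    mem_incValleyDyck]
  constructor
  · rintro ⟨hlen, hw, hv⟩
    have hne : w ≠ [] := by rintro rfl; simp at hlen
    obtain ⟨a, q, hq, rfl⟩ := hw.exists_eq_mountainLift hne hv
    rw [length_mountainLift] at hlen
    exact ⟨a, q,
      ⟨by omega, by omega, hq, (pairwise_valleyHeights_mountainLift_iff hq a).1 hv⟩, rfl⟩
  · rintro ⟨a, q, ⟨ha, hlen, hq, hv⟩, rfl⟩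
    exact ⟨by simp; omega, isDyckWord_mountainLift hq a,
      (pairwise_valleyHeights_mountainLift_iff hq a).2 hv⟩

lemma card_incValleyDyck_succ (n : ℕ) :
    (incValleyDyck (n + 1)).card = ∑ m ∈ Finset.range (n + 1), (incValleyDyck m).card := by
  rw [incValleyDyck_succ, Finset.card_image_of_injOn, Finset.card_sigma]
  · exact Finset.sum_range_reflect (fun m => (incValleyDyck m).card) (n + 1)
  · rintro ⟨a, q⟩ hq ⟨a', q'⟩ hq' h
    simp only [Finset.coe_sigma, Set.mem_sigma_iff, Finset.mem_coe, mem_incValleyDyck] at hq hq'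
    obtain ⟨rfl, rfl⟩ := mountainLift_inj hq.2.2.1 hq'.2.2.1 h
    rfl

lemma card_incValleyDyck (n : ℕ) : (incValleyDyck (n + 1)).card = 2 ^ n := by
  induction n with
  | zero => simp [card_incValleyDyck_succ, incValleyDyck_zero]
  | succ n ih =>
    rw [card_incValleyDyck_succ, Finset.sum_range_succ, ← card_incValleyDyck_succ, ih]
    ring

open PowerSeries in
lemma PowerSeries.mk_mul_one_sub_two_X {R : Type*} [CommRing R] {c : ℕ → R} (h0 : c 0 = 1)
    (hsucc : ∀ n, c (n + 1) = 2 ^ n) :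
    mk c * (1 - 2 * X) = 1 - X := by
  have h : mk c * (1 - 2 * X) = mk c - C 2 * (mk c * X) := by
    rw [map_ofNat]; ring
  rw [h]
  ext (_ | _ | n)
  · simp [h0]
  · norm_num [h0, hsucc]
  · simp [coeff_X, hsucc, pow_succ, mul_comm]

open PowerSeries in
/-- The number of Dyck paths of semilength `n ≥ 1` whose valley
heights strictly increase is `2^{n−1}`; equivalently, the generating function of
such paths is `(1−z)/(1−2z)`. -/
theorem strictly_increasing_valleys_count :
    (∀ n : ℕ, 1 ≤ n →
      ((dyckFinset n).filter
        (fun w => (valleyHeights w).Pairwise (· < ·))).card = 2 ^ (n - 1)) ∧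
    (mk fun n => (((dyckFinset n).filter
        (fun w => (valleyHeights w).Pairwise (· < ·))).card : ℚ)) * (1 - 2 * X) =
      1 - X := by
  refine ⟨fun n hn => ?_, ?_⟩
  · obtain ⟨m, rfl⟩ := Nat.exists_eq_add_of_le' hn
    exact card_incValleyDyck m
  · exact PowerSeries.mk_mul_one_sub_two_X (c := fun n => ((incValleyDyck n).card : ℚ))
      (by simp [incValleyDyck_zero]) fun n => by simp [card_incValleyDyck n]
end

section
/- Every Dyck path with strictly increasing peak heights whose highest peak has height a ≥ 1 decomposes uniquely as u P₁ u P₂ u ⋯ u P_{a−1} u d^a, where each P_i is of the form d^j u^j with 0 ≤ j ≤ i. -/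
/-- the pit `d^j u^j`. -/
def pit (j : ℕ) : List Bool := List.replicate j false ++ List.replicate j true

/-- the path `u P₁ u P₂ ⋯ u P_{a−1} u d^a`, where `P_i` is the pit `d^{j_i} u^{j_i}`
given by the list `js = [j₁, …, j_{a−1}]`. -/
def buildIncr (js : List ℕ) (a : ℕ) : List Bool :=
  [true] ++ (js.map (fun j => pit j ++ [true])).flatten ++ List.replicate a false

/-!
The highest peak is the last one, so after it the path only descends, which gives the final
`d^a`. The part before it climbs from `0` to `a` with all peaks below `a`. Such a climb ends with
an up step; before that step the path never rises above `a - 1`, so after its first visit to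
height `a - 1` it has no peak (a later one would have to be higher than the peak reaching
`a - 1`), hence that segment is a pit `d^j u^j` with `j ≤ a - 1`, and what precedes it is a climb
to `a - 1`. Uniqueness holds because the blocks `d^j u^(j+1)` can be read off from left to right.
-/

open List

@[simp] theorem hgt_zero (w : List Bool) : hgt w 0 = 0 := by simp [hgt]

theorem hgt_take (w : List Bool) (T j : ℕ) : hgt (w.take T) j = hgt w (min j T) := by
  simp [hgt, List.take_take]

theorem hgt_take_length {w : List Bool} {T : ℕ} (h : T ≤ w.length) :
    hgt (w.take T) (w.take T).length = hgt w T := by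
  simp [hgt_take, h]

theorem hgt_of_length_le {w : List Bool} {j : ℕ} (h : w.length ≤ j) :
    hgt w j = hgt w w.length := by
  simp [hgt, List.take_of_length_le h]

theorem hgt_append_of_le {x : List Bool} (z : List Bool) {j : ℕ} (h : j ≤ x.length) :
    hgt (x ++ z) j = hgt x j := by
  simp [hgt, List.take_append_of_le_length h]

theorem hgt_append_length_add (x z : List Bool) (j : ℕ) :
    hgt (x ++ z) (x.length + j) = hgt x x.length + hgt z j := by
  simp [hgt, List.take_append, List.take_of_length_le (by omega : x.length ≤ x.length + j)]
  ring

theorem hgt_replicate (n j : ℕ) (c : Bool) :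
    hgt (replicate n c) j = if c then (min j n : ℤ) else -(min j n : ℤ) := by
  cases c <;> simp [hgt, List.take_replicate, List.count_replicate]

theorem hgt_succ_of_getElem? {w : List Bool} {j : ℕ} {c : Bool} (h : w[j]? = some c) :
    hgt w (j + 1) = hgt w j + if c then 1 else -1 := by
  rw [hgt, hgt, List.take_add_one, h]
  cases c <;> simp <;> ring

theorem getElem?_eq_some_true_of_hgt_le {w : List Bool} {j : ℕ} (h : j < w.length)
    (hle : hgt w j ≤ hgt w (j + 1)) : w[j]? = some true := by
  have := hgt_succ_of_getElem? (List.getElem?_eq_getElem h)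
  rw [List.getElem?_eq_getElem h]
  cases hc : w[j] <;> simp_all

theorem getElem?_eq_some_false_of_hgt_le {w : List Bool} {j : ℕ} (h : j < w.length)
    (hle : hgt w (j + 1) ≤ hgt w j) : w[j]? = some false := by
  have := hgt_succ_of_getElem? (List.getElem?_eq_getElem h)
  rw [List.getElem?_eq_getElem h]
  cases hc : w[j] <;> simp_all

theorem isPeakB_iff {w : List Bool} {i : ℕ} :
    isPeakB w i = true ↔ w[i]? = some true ∧ w[i + 1]? = some false := by
  simp only [isPeakB, List.getD_eq_getElem?_getD]
  cases w[i]? <;> cases w[i + 1]? <;> simp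

theorem lt_length_of_isPeakB {w : List Bool} {i : ℕ} (h : isPeakB w i = true) :
    i + 1 < w.length := by
  have := (isPeakB_iff.mp h).2
  by_contra hc
  simp [List.getElem?_eq_none (by omega : w.length ≤ i + 1)] at this

theorem hgt_succ_of_isPeakB {w : List Bool} {i : ℕ} (h : isPeakB w i = true) :
    hgt w (i + 1) = hgt w i + 1 :=
  hgt_succ_of_getElem? (isPeakB_iff.mp h).1

theorem isPeakB_cons_succ (c : Bool) (w : List Bool) (k : ℕ) :
    isPeakB (c :: w) (k + 1) = isPeakB w k := by
  simp [isPeakB]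

theorem isPeakB_drop (w : List Bool) (n k : ℕ) : isPeakB (w.drop n) k = isPeakB w (n + k) := by
  simp [isPeakB, List.getD_eq_getElem?_getD, add_assoc]

theorem isPeakB_take_iff {w : List Bool} {T i : ℕ} :
    isPeakB (w.take T) i = true ↔ i + 1 < T ∧ isPeakB w i = true := by
  by_cases h : i + 1 < T
  · simp [isPeakB_iff, h, show i < T by omega]
  · simp [isPeakB_iff, h]

theorem hgt_le_of_peaks_le {y : List Bool} {b : ℤ} (h0 : 0 ≤ b) (hend : hgt y y.length ≤ b)
    (hpeak : ∀ i, isPeakB y i = true → hgt y (i + 1) ≤ b) (k : ℕ) : hgt y k ≤ b := by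
  obtain ⟨m, -, hmax⟩ := (Finset.range (y.length + 1)).exists_max_image (hgt y) ⟨0, by simp⟩
  have hmax' : ∀ j, hgt y j ≤ hgt y m := fun j => by
    rcases le_or_gt j y.length with hj | hj
    · exact hmax j (by simp; omega)
    · rw [hgt_of_length_le hj.le]; exact hmax _ (by simp)
  -- the first position where the maximum is attained is an endpoint or the top of a peak
  have hex : ∃ n, hgt y m ≤ hgt y n := ⟨m, le_rfl⟩
  obtain ⟨n, hn⟩ : ∃ n, Nat.find hex = n := ⟨_, rfl⟩
  have hnmax : hgt y n = hgt y m := le_antisymm (hmax' n) (hn ▸ Nat.find_spec hex)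
  refine (hmax' k).trans (hnmax ▸ ?_)
  rcases n with _ | t
  · simpa using h0
  rcases le_or_gt y.length (t + 1) with hlen | hlen
  · rwa [hgt_of_length_le hlen]
  have hbefore : hgt y t < hgt y m := not_le.mp (Nat.find_min hex (by omega))
  refine hpeak t (isPeakB_iff.mpr ⟨?_, ?_⟩)
  · exact getElem?_eq_some_true_of_hgt_le (by omega) (by linarith)
  · exact getElem?_eq_some_false_of_hgt_le hlen (by linarith [hmax' (t + 1 + 1)])

def PeaksIncreasing (w : List Bool) : Prop :=
  ∀ ⦃i i'⦄, isPeakB w i = true → isPeakB w i' = true → i < i' → hgt w (i + 1) < hgt w (i' + 1)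

theorem peaksIncreasing_of_pairwise {w : List Bool} (h : (peakHeights w).Pairwise (· < ·)) :
    PeaksIncreasing w := by
  rw [peakHeights, List.pairwise_map, peakList, List.pairwise_filter,
    List.pairwise_iff_getElem] at h
  intro i i' hi hi' hlt
  have hi'len := lt_length_of_isPeakB hi'
  have := h i i' (by simp; omega) (by simp; omega) hlt (by simpa using hi) (by simpa using hi')
  simpa using this

theorem PeaksIncreasing.take {w : List Bool} (h : PeaksIncreasing w) (T : ℕ) :
    PeaksIncreasing (w.take T) := by
  intro i i' hi hi' hlt
  rw [isPeakB_take_iff] at hi hi'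
  simpa [hgt_take, show i + 1 ≤ T by omega, show i' + 1 ≤ T by omega] using h hi.2 hi'.2 hlt

theorem mem_peakHeights {w : List Bool} {h : ℤ} :
    h ∈ peakHeights w ↔ ∃ i, isPeakB w i = true ∧ hgt w (i + 1) = h := by
  simp only [peakHeights, peakList, List.mem_map, List.mem_filter, List.mem_range]
  exact ⟨fun ⟨i, ⟨_, hi⟩, he⟩ => ⟨i, hi, he⟩,
    fun ⟨i, hi, he⟩ => ⟨i, ⟨by linarith [lt_length_of_isPeakB hi], hi⟩, he⟩⟩

def PeakFree (w : List Bool) : Prop := ∀ k, isPeakB w k = false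

theorem PeakFree.eq_replicate_append_replicate {s : List Bool} (hs : PeakFree s) :
    ∃ p q, s = replicate p false ++ replicate q true := by
  induction s with
  | nil => exact ⟨0, 0, rfl⟩
  | cons c t ih =>
    obtain ⟨p, q, rfl⟩ := ih fun k => by simpa only [isPeakB_cons_succ] using hs (k + 1)
    cases c with
    | false => exact ⟨p + 1, q, rfl⟩
    | true =>
      cases p with
      | zero => exact ⟨0, q + 1, rfl⟩
      | succ p => simpa [isPeakB, List.replicate_succ] using hs 0

theorem PeakFree.exists_append_eq {z s : List Bool} (hs : PeakFree s)
    (hnonneg : ∀ j, 0 ≤ hgt (z ++ s) j) :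
    ∃ p q : ℕ, s = replicate p false ++ replicate q true ∧ (p : ℤ) ≤ hgt z z.length ∧
      hgt (z ++ s) (z ++ s).length = hgt z z.length - p + q := by
  obtain ⟨p, q, rfl⟩ := hs.eq_replicate_append_replicate
  refine ⟨p, q, rfl, ?_, ?_⟩
  · have := hnonneg (z.length + p)
    rw [hgt_append_length_add, hgt_append_of_le _ (by simp), hgt_replicate] at this
    simp at this
    linarith
  · rw [List.length_append, hgt_append_length_add, List.length_append, hgt_append_length_add]
    simp [hgt_replicate]
    ring

theorem peakFree_drop_of_hgt_eq_max {x : List Bool} {b : ℤ} {T : ℕ} (hnonneg : ∀ j, 0 ≤ hgt x j)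
    (hmax : ∀ j, hgt x j ≤ b) (hT : hgt x T = b) (hinc : PeaksIncreasing x) :
    PeakFree (x.drop T) := by
  intro k
  rw [isPeakB_drop]
  by_contra hk
  rw [Bool.not_eq_false] at hk
  have hlen := lt_length_of_isPeakB hk
  have hk_up := hgt_succ_of_isPeakB hk
  cases T with
  | zero =>
    rw [hgt_zero] at hT
    linarith [hnonneg (0 + k), hmax (0 + k + 1)]
  | succ t =>
    -- the maximum is reached at `t + 1` by the peak at `t`, and later peaks would be higher
    have htop : isPeakB x t = true := isPeakB_iff.mpr
      ⟨getElem?_eq_some_true_of_hgt_le (by omega) (by linarith [hmax t]),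
        getElem?_eq_some_false_of_hgt_le (by omega) (by linarith [hmax (t + 1 + 1)])⟩
    linarith [hinc htop hk (by omega), hmax (t + 1 + k + 1)]

theorem IsDyckWord.drop_eq_replicate_of_peakFree {w : List Bool} (hw : IsDyckWord w) {T a : ℕ}
    (hT : T ≤ w.length) (ha : hgt w T = a) (hfree : PeakFree (w.drop T)) :
    w.drop T = replicate a false := by
  obtain ⟨p, q, hs, hp, hend⟩ :=
    hfree.exists_append_eq (z := w.take T) (by rw [List.take_append_drop]; exact hw.2)
  rw [List.take_append_drop] at hend
  rw [hgt_take_length hT, ha] at hend hp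
  rw [hgt, List.take_length, hw.1, sub_self] at hend
  obtain rfl : p = a := by omega
  obtain rfl : q = 0 := by omega
  simpa using hs

structure IsClimb (b : ℕ) (y : List Bool) : Prop where
  nonneg : ∀ j, 0 ≤ hgt y j
  hgt_length : hgt y y.length = b
  peaksIncreasing : PeaksIncreasing y
  peak_lt : ∀ i, isPeakB y i = true → hgt y (i + 1) < b

theorem isClimb_take {x : List Bool} {b T : ℕ} (hnonneg : ∀ j, 0 ≤ hgt x j)
    (hinc : PeaksIncreasing x) (hT : T ≤ x.length) (hb : hgt x T = b)
    (hpeak : ∀ i, i + 1 < T → isPeakB x i = true → hgt x (i + 1) < b) : IsClimb b (x.take T) where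
  nonneg j := by rw [hgt_take]; exact hnonneg _
  hgt_length := by simpa [hgt_take, hT] using hb
  peaksIncreasing := hinc.take T
  peak_lt i hi := by
    rw [isPeakB_take_iff] at hi
    simpa [hgt_take, show i + 1 ≤ T by omega] using hpeak i hi.1 hi.2

theorem IsClimb.hgt_le {b : ℕ} {y : List Bool} (h : IsClimb b y) (k : ℕ) : hgt y k ≤ b :=
  hgt_le_of_peaks_le (by positivity) h.hgt_length.le (fun i hi => (h.peak_lt i hi).le) k

theorem IsClimb.eq_nil {y : List Bool} (h : IsClimb 0 y) : y = [] := by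
  by_contra hne
  have := hgt_succ_of_getElem? (List.getElem?_eq_getElem (List.length_pos_iff.mpr hne))
  have h1 := h.hgt_le 1
  have h1' := h.nonneg 1
  rw [zero_add, hgt_zero] at this
  split_ifs at this <;> omega

theorem IsClimb.exists_eq_append_true {b : ℕ} {y : List Bool} (h : IsClimb (b + 1) y) :
    ∃ x, y = x ++ [true] ∧ (∀ j, 0 ≤ hgt x j) ∧ hgt x x.length = b ∧ PeaksIncreasing x ∧
      ∀ j, hgt x j ≤ b := by
  obtain ⟨x, c, rfl⟩ : ∃ x c, y = x ++ [c] := by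
    rcases List.eq_nil_or_concat' y with rfl | ⟨x, c, rfl⟩
    · have := h.hgt_length
      simp at this
      omega
    · exact ⟨x, c, rfl⟩
  have hx : (x ++ [c]).take x.length = x := by simp
  have hgt_x : ∀ j, hgt x j = hgt (x ++ [c]) (min j x.length) := fun j => by
    rw [← hgt_take, hx]
  have hlast := h.hgt_length
  rw [List.length_append, List.length_singleton, hgt_append_length_add,
    hgt_succ_of_getElem? (w := [c]) (j := 0) rfl] at hlast
  obtain rfl : c = true := by
    by_contra hc
    have := h.hgt_le x.length
    rw [hgt_append_of_le _ le_rfl] at this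
    simp [hc] at hlast
    omega
  have hend : hgt x x.length = b := by simp at hlast; omega
  refine ⟨x, rfl, fun j => hgt_x j ▸ h.nonneg _, hend, hx ▸ h.peaksIncreasing.take _,
    hgt_le_of_peaks_le (by positivity) hend.le fun i hi => ?_⟩
  rw [← hx, isPeakB_take_iff] at hi
  have := h.peak_lt i hi.2
  rw [hgt_x, min_eq_left (by omega)]
  omega

theorem exists_eq_append_pit {x : List Bool} {b : ℕ} (hnonneg : ∀ j, 0 ≤ hgt x j)
    (hend : hgt x x.length = b) (hinc : PeaksIncreasing x) (hmax : ∀ j, hgt x j ≤ b) :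
    ∃ z p, p ≤ b ∧ IsClimb b z ∧ x = z ++ pit p := by
  have hex : ∃ T, hgt x T = b := ⟨_, hend⟩
  have hT := Nat.find_spec hex
  have hTlen : Nat.find hex ≤ x.length := Nat.find_min' hex hend
  have hfree := peakFree_drop_of_hgt_eq_max hnonneg hmax hT hinc
  obtain ⟨p, q, hs, hp, hq⟩ :=
    hfree.exists_append_eq (z := x.take (Nat.find hex)) (by rwa [List.take_append_drop])
  rw [hgt_take_length hTlen, hT] at hp
  rw [List.take_append_drop, hgt_take_length hTlen, hT, hend] at hq
  obtain rfl : p = q := by omega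
  refine ⟨x.take (Nat.find hex), p, by omega, isClimb_take hnonneg hinc hTlen hT
    fun i hi _ => lt_of_le_of_ne (hmax _) (Nat.find_min hex hi), ?_⟩
  rw [pit, ← hs, List.take_append_drop]

def pitStairs (js : List ℕ) : List Bool := (js.map fun j => pit j ++ [true]).flatten

theorem IsClimb.exists_eq_pitStairs : ∀ {b : ℕ} {y : List Bool}, IsClimb b y →
    ∃ js : List ℕ, js.length = b ∧ (∀ i < js.length, js.getD i 0 ≤ i) ∧ y = pitStairs js
  | 0, _, h => ⟨[], rfl, by simp, h.eq_nil⟩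
  | b + 1, _, h => by
    obtain ⟨x, rfl, hnonneg, hend, hinc, hmax⟩ := h.exists_eq_append_true
    obtain ⟨z, p, hp, hz, rfl⟩ := exists_eq_append_pit hnonneg hend hinc hmax
    obtain ⟨js, rfl, hbound, rfl⟩ := hz.exists_eq_pitStairs
    refine ⟨js ++ [p], by simp, fun i hi => ?_, by simp [pitStairs]⟩
    rw [List.length_append, List.length_singleton] at hi
    rcases Nat.lt_succ_iff_lt_or_eq.mp hi with hi | rfl
    · rw [List.getD_append _ _ _ _ hi]
      exact hbound i hi
    · simpa using hp

theorem replicate_false_append_true_cons_inj {j j' : ℕ} {l l' : List Bool} :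
    replicate j false ++ true :: l = replicate j' false ++ true :: l' ↔ j = j' ∧ l = l' := by
  refine ⟨fun h => ?_, by rintro ⟨rfl, rfl⟩; rfl⟩
  induction j generalizing j' with
  | zero => cases j' <;> simp_all [List.replicate_succ]
  | succ j ih => cases j' <;> simp_all [List.replicate_succ]

theorem pit_append_true_append (j : ℕ) (l : List Bool) :
    pit j ++ [true] ++ l = replicate j false ++ true :: (replicate j true ++ l) := by
  rw [pit, List.append_assoc, List.append_assoc, ← List.append_assoc (replicate j true),
    ← List.replicate_succ', List.replicate_succ, List.cons_append]

theorem pitStairs_injective : Function.Injective pitStairs := by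
  intro js js' h
  induction js generalizing js' with
  | nil => cases js' <;> simp_all [pitStairs]
  | cons j js ih =>
    cases js' with
    | nil => simp [pitStairs] at h
    | cons j' js' =>
      simp only [pitStairs, List.map_cons, List.flatten_cons] at h
      rw [pit_append_true_append, pit_append_true_append] at h
      obtain ⟨rfl, h⟩ := replicate_false_append_true_cons_inj.mp h
      rw [ih (List.append_cancel_left h)]

theorem buildIncr_injective (a : ℕ) : Function.Injective (buildIncr · a) := fun _ _ h =>
  pitStairs_injective (List.append_cancel_right (List.cons_injective h))

theorem buildIncr_eq_pitStairs (js : List ℕ) (a : ℕ) :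
    buildIncr js a = pitStairs (0 :: js) ++ replicate a false := by
  simp [buildIncr, pitStairs, pit]

theorem strictly_increasing_peaks_decomposition_general (w : List Bool) (hw : IsDyckWord w)
    (a : ℕ)
    (hinc : (peakHeights w).Pairwise (· < ·))
    (hmem : (a : ℤ) ∈ peakHeights w)
    (hmax : ∀ h ∈ peakHeights w, h ≤ (a : ℤ)) :
    ∃! js : List ℕ,
      js.length = a - 1 ∧ (∀ i < js.length, js.getD i 0 ≤ i + 1) ∧
      w = buildIncr js a := by
  have hinc := peaksIncreasing_of_pairwise hinc
  obtain ⟨i₀, hpeak, htop⟩ := mem_peakHeights.mp hmem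
  have hlen := lt_length_of_isPeakB hpeak
  have hclimb : IsClimb a (w.take (i₀ + 1)) := isClimb_take hw.2 hinc hlen.le htop
    fun _ hi hpi => htop ▸ hinc hpi hpeak (by omega)
  have htail : w.drop (i₀ + 1) = replicate a false := by
    refine hw.drop_eq_replicate_of_peakFree hlen.le htop fun k => ?_
    rw [isPeakB_drop, ← Bool.not_eq_true]
    intro hk
    linarith [hinc hpeak hk (by omega), hmax _ (mem_peakHeights.mpr ⟨_, hk, rfl⟩)]
  have ha : 0 < a := by linarith [hgt_succ_of_isPeakB hpeak, hw.2 i₀]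
  obtain ⟨js, hjslen, hbound, hjs⟩ := hclimb.exists_eq_pitStairs
  obtain ⟨j₀, js, rfl⟩ := List.exists_cons_of_length_pos (hjslen ▸ ha)
  obtain rfl : j₀ = 0 := by simpa using hbound 0 (by simp)
  have hdecomp : w = buildIncr js a := by
    rw [← List.take_append_drop (i₀ + 1) w, hjs, htail, buildIncr_eq_pitStairs]
  refine ⟨js, ⟨by simp at hjslen; omega, fun i hi => by simpa using hbound (i + 1) (by simpa),
    hdecomp⟩, fun js' ⟨_, _, hw'⟩ => buildIncr_injective a (hw'.symm.trans hdecomp)⟩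

/-- Every Dyck path with strictly increasing peak heights whose
highest peak has height `a ≥ 1` decomposes uniquely as
`u P₁ u P₂ ⋯ u P_{a−1} u d^a` with each `P_i = d^{j_i} u^{j_i}`, `0 ≤ j_i ≤ i`. -/
theorem strictly_increasing_peaks_decomposition (w : List Bool) (hw : IsDyckWord w)
    (a : ℕ) (ha : 1 ≤ a)
    (hinc : (peakHeights w).Pairwise (· < ·))
    (hmem : (a : ℤ) ∈ peakHeights w)
    (hmax : ∀ h ∈ peakHeights w, h ≤ (a : ℤ)) :
    ∃! js : List ℕ,
      js.length = a - 1 ∧ (∀ i < js.length, js.getD i 0 ≤ i + 1) ∧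
      w = buildIncr js a :=
  strictly_increasing_peaks_decomposition_general w hw a hinc hmem hmax
end
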